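/- arXiv:math/0406589 — 2 statements merged into one kernel-verified Lean document; each statement's English description precedes it below -/
import Mathlib

section
/- For any positive integer n, index sequence I = (i₁,…,i_k) of positive integers, and complex arguments X = (x₁,…,x_k), the strictly-decreasing sum A_I(n;X) equals the alternating sum over all compositions J of k of (−1)^{ℓ(J)−k} S_{J∘I}(n; J(X)), where ℓ(J) is the number of parts of J. -/
open Finset

/-- The strict multiple harmonic sum `A_I(n; X)`, where the word pairs each exponent
`i_s` with its argument `x_s`. -/
noncomputable def Asum (n : ℕ) : List (ℕ × ℂ) → ℂ
  | [] => 1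
  | p :: t => ∑ m ∈ Finset.Icc 1 n, p.2 ^ m / (m : ℂ) ^ p.1 * Asum (m - 1) t

/-- The weak multiple harmonic sum `S_I(n; X)`. -/
noncomputable def Ssum (n : ℕ) : List (ℕ × ℂ) → ℂ
  | [] => 1
  | p :: t => ∑ m ∈ Finset.Icc 1 n, p.2 ^ m / (m : ℂ) ^ p.1 * Ssum m t

/-- For a composition `J` of `k` and a word of length `k`, `(J ∘ I, J(X))`: sum the
exponents and multiply the arguments in each consecutive block. -/
def contractC {k : ℕ} (J : Composition k) (w : List (ℕ × ℂ)) : List (ℕ × ℂ) :=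
  (w.splitWrtComposition J).map fun b => ((b.map Prod.fst).sum, (b.map Prod.snd).prod)

/-! ### Auxiliary material -/

lemma Ssum_succ (m : ℕ) (hm : 1 ≤ m) (q : ℕ × ℂ) (u : List (ℕ × ℂ)) :
    Ssum m (q :: u) = Ssum (m - 1) (q :: u) + q.2 ^ m / (m : ℂ) ^ q.1 * Ssum m u := by
  obtain ⟨m', rfl⟩ : ∃ m', m = m' + 1 := ⟨m - 1, by omega⟩
  simp only [Ssum]
  rw [Finset.sum_Icc_succ_top (by omega)]
  simp

/-- Key identity: a "strict first step" with weak tail. -/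
lemma strict_step (n : ℕ) (p q : ℕ × ℂ) (u : List (ℕ × ℂ)) :
    ∑ m ∈ Finset.Icc 1 n, p.2 ^ m / (m : ℂ) ^ p.1 * Ssum (m - 1) (q :: u)
      = Ssum n (p :: q :: u) - Ssum n ((p.1 + q.1, p.2 * q.2) :: u) := by
  have h1 : Ssum n (p :: q :: u)
      = ∑ m ∈ Finset.Icc 1 n, p.2 ^ m / (m : ℂ) ^ p.1 *
          (Ssum (m - 1) (q :: u) + q.2 ^ m / (m : ℂ) ^ q.1 * Ssum m u) := by
    show (∑ m ∈ Finset.Icc 1 n, p.2 ^ m / (m : ℂ) ^ p.1 * Ssum m (q :: u)) = _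
    refine Finset.sum_congr rfl fun m hm => ?_
    rw [Ssum_succ m (Finset.mem_Icc.mp hm).1]
  have h2 : Ssum n ((p.1 + q.1, p.2 * q.2) :: u)
      = ∑ m ∈ Finset.Icc 1 n, p.2 ^ m / (m : ℂ) ^ p.1 *
          (q.2 ^ m / (m : ℂ) ^ q.1 * Ssum m u) := by
    show (∑ m ∈ Finset.Icc 1 n, (p.2 * q.2) ^ m / (m : ℂ) ^ (p.1 + q.1) * Ssum m u) = _
    refine Finset.sum_congr rfl fun m hm => ?_
    rw [mul_pow, pow_add]
    field_simp
  rw [h1, h2, ← Finset.sum_sub_distrib]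
  refine Finset.sum_congr rfl fun m hm => ?_
  ring

/-- Prepend a block of size one to a composition. -/
def compCons1 {k : ℕ} (J : Composition k) : Composition (k + 1) where
  blocks := 1 :: J.blocks
  blocks_pos := by
    intro i hi
    rcases List.mem_cons.mp hi with h | h
    · omega
    · exact J.blocks_pos h
  blocks_sum := by simp [J.blocks_sum, Nat.add_comm]

/-- Enlarge the first block of a (nonempty) composition by one. -/
def compConsM {k : ℕ} (J : Composition k) (h : J.blocks ≠ []) : Composition (k + 1) where
  blocks := (J.blocks.head h + 1) :: J.blocks.tail
  blocks_pos := by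
    intro i hi
    rcases List.mem_cons.mp hi with h' | h'
    · omega
    · exact J.blocks_pos (List.mem_of_mem_tail h')
  blocks_sum := by
    have := J.blocks_sum
    rw [← List.cons_head_tail h] at this
    simp only [List.sum_cons] at this ⊢
    omega

lemma blocks_ne {k : ℕ} (hk : 0 < k) (J : Composition k) : J.blocks ≠ [] := by
  intro h
  have := J.blocks_sum
  rw [h] at this
  simp at this
  omega

lemma compCons1_length {k : ℕ} (J : Composition k) :
    (compCons1 J).length = J.length + 1 := rfl

lemma compConsM_length {k : ℕ} (J : Composition k) (h : J.blocks ≠ []) :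
    (compConsM J h).length = J.length := by
  simp only [Composition.length, compConsM]
  conv_rhs => rw [← List.cons_head_tail h]
  simp
  have := List.length_pos_iff.mpr h
  omega

/-- The map realizing `Composition (k+1) ≃ Bool × Composition k` for `0 < k`. -/
def compSplit {k : ℕ} (hk : 0 < k) : Bool × Composition k → Composition (k + 1) :=
  fun x => if x.1 then compCons1 x.2 else compConsM x.2 (blocks_ne hk x.2)

lemma compSplit_bijective {k : ℕ} (hk : 0 < k) : Function.Bijective (compSplit hk) := by
  constructor
  · rintro ⟨b, J⟩ ⟨b', J'⟩ h
    have hb := blocks_ne hk J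
    have hb' := blocks_ne hk J'
    have hJ1 : 0 < J.blocks.head hb := J.blocks_pos (List.head_mem hb)
    have hJ1' : 0 < J'.blocks.head hb' := J'.blocks_pos (List.head_mem hb')
    simp only [compSplit] at h
    cases b <;> cases b' <;> simp only [if_true, if_false, Bool.false_eq_true] at h
    · have h' : (compConsM J hb).blocks = (compConsM J' hb').blocks := by rw [h]
      simp only [compConsM, List.cons.injEq] at h'
      refine Prod.ext rfl (Composition.ext ?_)
      rw [← List.cons_head_tail hb, ← List.cons_head_tail hb']
      rw [h'.2]
      congr 1
      omega
    · have h' : (compConsM J hb).blocks = (compCons1 J').blocks := by rw [h]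
      simp only [compConsM, compCons1, List.cons.injEq] at h'
      omega
    · have h' : (compCons1 J).blocks = (compConsM J' hb').blocks := by rw [h]
      simp only [compConsM, compCons1, List.cons.injEq] at h'
      omega
    · have h' : (compCons1 J).blocks = (compCons1 J').blocks := by rw [h]
      simp only [compCons1, List.cons.injEq] at h'
      exact Prod.ext rfl (Composition.ext h'.2)
  · intro J
    obtain ⟨a, l, hal⟩ : ∃ a l, J.blocks = a :: l := by
      cases h : J.blocks with
      | nil =>
        exact absurd h (blocks_ne (by omega) J)
      | cons a l => exact ⟨a, l, rfl⟩
    have ha : 0 < a := J.blocks_pos (hal ▸ List.mem_cons_self (a := a) (l := l))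
    have hsum : a + l.sum = k + 1 := by
      have := J.blocks_sum
      rw [hal] at this
      simpa using this
    by_cases h1 : a = 1
    · have hlsum : l.sum = k := by omega
      have hlpos : ∀ {i : ℕ}, i ∈ l → 0 < i := fun hi =>
        J.blocks_pos (hal ▸ List.mem_cons_of_mem _ hi)
      refine ⟨⟨true, ⟨l, hlpos, hlsum⟩⟩, ?_⟩
      simp only [compSplit, if_true]
      exact Composition.ext (by simp [compCons1, hal, h1])
    · have hsum' : (a - 1) + l.sum = k := by omega
      have hpos : ∀ {i : ℕ}, i ∈ (a - 1) :: l → 0 < i := by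
        intro i hi
        rcases List.mem_cons.mp hi with h' | h'
        · omega
        · exact J.blocks_pos (hal ▸ List.mem_cons_of_mem _ h')
      refine ⟨⟨false, ⟨(a - 1) :: l, hpos, by simpa using hsum'⟩⟩, ?_⟩
      simp only [compSplit, if_false, Bool.false_eq_true]
      refine Composition.ext ?_
      simp only [compConsM, hal, List.head_cons, List.tail_cons]
      congr 1
      omega

/-- Merging a pair onto the head of a word. -/
def mergeHead (p : ℕ × ℂ) : List (ℕ × ℂ) → List (ℕ × ℂ)
  | [] => [p]
  | q :: u => (p.1 + q.1, p.2 * q.2) :: u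

lemma contractC_cons1 {k : ℕ} (J : Composition k) (p : ℕ × ℂ) (t : List (ℕ × ℂ)) :
    contractC (compCons1 J) (p :: t) = p :: contractC J t := by
  simp only [contractC, List.splitWrtComposition, compCons1,
    List.splitWrtCompositionAux_cons]
  simp

lemma contractC_consM {k : ℕ} (J : Composition k) (h : J.blocks ≠ []) (p : ℕ × ℂ)
    (t : List (ℕ × ℂ)) :
    contractC (compConsM J h) (p :: t) = mergeHead p (contractC J t) := by
  obtain ⟨a, l, hal⟩ : ∃ a l, J.blocks = a :: l := by
    cases h' : J.blocks with
    | nil => exact absurd h' h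
    | cons a l => exact ⟨a, l, rfl⟩
  have hM : (compConsM J h).blocks = (a + 1) :: l := by
    simp only [compConsM, hal, List.head_cons, List.tail_cons]
  simp only [contractC, List.splitWrtComposition, hM, hal,
    List.splitWrtCompositionAux_cons]
  simp only [List.map_cons, List.take_succ_cons, List.drop_succ_cons, mergeHead]
  simp [mergeHead]

lemma contractC_length {k : ℕ} (J : Composition k) (w : List (ℕ × ℂ)) :
    (contractC J w).length = J.length := by
  simp [contractC, List.splitWrtComposition, List.length_splitWrtCompositionAux,
    Composition.blocks_length]

lemma contractC_ne {k : ℕ} (hk : 0 < k) (J : Composition k) (w : List (ℕ × ℂ)) :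
    contractC J w ≠ [] := by
  intro h
  have h1 := contractC_length J w
  rw [h] at h1
  have := J.length_pos_of_pos hk
  simp at h1
  omega

lemma unique_comp_zero (J : Composition 0) : J.blocks = [] := by
  have hs := J.blocks_sum
  rcases h : J.blocks with _ | ⟨a, l⟩
  · rfl
  · exfalso
    have ha : 0 < a := J.blocks_pos (h ▸ List.mem_cons_self (a := a) (l := l))
    rw [h] at hs
    simp only [List.sum_cons] at hs
    omega

lemma main_aux (w : List (ℕ × ℂ)) : ∀ n : ℕ,
    Asum n w =
      ∑ J : Composition w.length, (-1 : ℂ) ^ (w.length - J.length) * Ssum n (contractC J w) := by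
  induction w with
  | nil =>
    intro n
    show Asum n [] = ∑ J : Composition 0, (-1 : ℂ) ^ (0 - J.length) * Ssum n (contractC J [])
    have huniq : ∀ J : Composition 0, J = Composition.ones 0 := by
      intro J
      exact Composition.ext (by simp [unique_comp_zero J, Composition.ones])
    rw [Finset.sum_eq_single_of_mem (Composition.ones 0) (Finset.mem_univ _)
      (fun J _ hJ => absurd (huniq J) hJ)]
    simp [Asum, Ssum, contractC, List.splitWrtComposition, Composition.ones,
      List.splitWrtCompositionAux]
  | cons p t ih =>
    intro n
    have step1 : Asum n (p :: t) =
        ∑ J : Composition t.length, (-1 : ℂ) ^ (t.length - J.length) *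
          ∑ m ∈ Finset.Icc 1 n, p.2 ^ m / (m : ℂ) ^ p.1 * Ssum (m - 1) (contractC J t) := by
      simp only [Asum]
      have h0 : ∀ m ∈ Finset.Icc 1 n, p.2 ^ m / (m : ℂ) ^ p.1 * Asum (m - 1) t
          = ∑ J : Composition t.length,
              (-1 : ℂ) ^ (t.length - J.length) *
                (p.2 ^ m / (m : ℂ) ^ p.1 * Ssum (m - 1) (contractC J t)) := by
        intro m _
        rw [ih (m - 1), Finset.mul_sum]
        exact Finset.sum_congr rfl fun J _ => by ring
      rw [Finset.sum_congr rfl h0, Finset.sum_comm]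
      exact Finset.sum_congr rfl fun J _ => by rw [Finset.mul_sum]
    cases t with
    | nil =>
      -- length 1: unique composition [1]
      show Asum n [p] = ∑ J : Composition 1, (-1 : ℂ) ^ (1 - J.length) * Ssum n (contractC J [p])
      have huniq : ∀ J : Composition 1, J = Composition.ones 1 := by
        intro J
        refine Composition.ext ?_
        have hs := J.blocks_sum
        rcases h : J.blocks with _ | ⟨a, l⟩
        · rw [h] at hs; simp at hs
        · rw [h] at hs
          simp only [List.sum_cons, List.length_cons, List.length_nil] at hs
          have ha : 0 < a := J.blocks_pos (h ▸ List.mem_cons_self (a := a) (l := l))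
          have hl : ∀ i ∈ l, 0 < i := fun i hi =>
            J.blocks_pos (h ▸ List.mem_cons_of_mem _ hi)
          have hl0 : l = [] := by
            cases l with
            | nil => rfl
            | cons b l' =>
              exfalso
              have hb : 0 < b := hl b (List.mem_cons_self (a := b) (l := l'))
              have : b ≤ l'.sum + b := Nat.le_add_left _ _
              simp only [List.sum_cons] at hs
              omega
          subst hl0
          simp only [List.sum_nil, add_zero] at hs
          simp [Composition.ones, hs]
      rw [Finset.sum_eq_single_of_mem (Composition.ones 1) (Finset.mem_univ _)
        (fun J _ hJ => absurd (huniq J) hJ)]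
      have hc : contractC (Composition.ones 1) [p] = [p] := by
        simp [contractC, List.splitWrtComposition, Composition.ones,
          List.splitWrtCompositionAux]
      rw [hc]
      simp only [List.length_cons, List.length_nil, Composition.ones_length, Nat.sub_self,
        pow_zero, one_mul]
      simp [Asum, Ssum]
    | cons q t' =>
      set t := q :: t' with ht
      have hk : 0 < t.length := by simp [ht]
      -- rewrite each inner sum via strict_step
      have step2 : Asum n (p :: t) =
          ∑ J : Composition t.length, (-1 : ℂ) ^ (t.length - J.length) *
            (Ssum n (p :: contractC J t) - Ssum n (mergeHead p (contractC J t))) := by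
        rw [step1]
        refine Finset.sum_congr rfl fun J _ => ?_
        congr 1
        obtain ⟨r, u, hru⟩ : ∃ r u, contractC J t = r :: u := by
          cases h' : contractC J t with
          | nil => exact absurd h' (contractC_ne hk J t)
          | cons r u => exact ⟨r, u, rfl⟩
        rw [hru]
        rw [strict_step]
        rfl
      rw [step2]
      -- now split the RHS sum over compositions of length k+1
      have hlen : (p :: t).length = t.length + 1 := rfl
      rw [show (∑ J : Composition (p :: t).length,
            (-1 : ℂ) ^ ((p :: t).length - J.length) * Ssum n (contractC J (p :: t)))
          = ∑ x : Bool × Composition t.length,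
            (-1 : ℂ) ^ (t.length + 1 - (compSplit hk x).length) *
              Ssum n (contractC (compSplit hk x) (p :: t)) from
        (Fintype.sum_bijective (compSplit hk) (compSplit_bijective hk) _ _
          (fun x => rfl)).symm]
      rw [Fintype.sum_prod_type]
      rw [Fintype.sum_bool]
      simp only [compSplit, if_true, if_false, Bool.false_eq_true]
      rw [← Finset.sum_add_distrib]
      refine Finset.sum_congr rfl fun J _ => ?_
      rw [contractC_cons1, contractC_consM, compCons1_length, compConsM_length]
      have hJle : J.length ≤ t.length := J.length_le
      have e1 : t.length + 1 - (J.length + 1) = t.length - J.length := by omega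
      have e2 : (-1 : ℂ) ^ (t.length + 1 - J.length) = -(-1 : ℂ) ^ (t.length - J.length) := by
        rw [show t.length + 1 - J.length = (t.length - J.length) + 1 by omega]
        rw [pow_succ]
        ring
      rw [e1, e2]
      ring

theorem A_eq_alt_sum_S (n : ℕ) (hn : 0 < n) (w : List (ℕ × ℂ)) (hw : ∀ p ∈ w, 0 < p.1) :
    Asum n w =
      ∑ J : Composition w.length, (-1 : ℂ) ^ (w.length - J.length) * Ssum n (contractC J w) := by
  exact main_aux w n
end

section
/- In the Hopf algebra (E_r, *, Δ), the antipode S satisfies, for every word w = a₁⋯a_n of length n, S(w) = (−1)^n Σ_{I ∈ C(n)} I[a_n a_{n−1} ⋯ a₁], where C(n) is the set of compositions of n and for I = (i₁,…,i_k), I[b₁⋯b_n] = [b₁,…,b_{i₁}][b_{i₁+1},…,b_{i₁+i₂}]⋯[b_{n−i_k+1},…,b_n], with [c₁,…,c_m] denoting the letter obtained by adding all first subscripts and adding all second subscripts mod r. -/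
open Finsupp Finset

/-- A letter `z_{i,j}`: first subscript a natural number (positive in intended use),
second subscript in `ℤ/r`. -/
abbrev QLetter (r : ℕ) := ℕ × ZMod r

/-- The Euler algebra `E_r` as a vector space: formal `ℂ`-linear combinations of words. -/
abbrev EulerAlg (r : ℕ) := List (QLetter r) →₀ ℂ

/-- `[a,b]`: add first subscripts, add second subscripts mod `r`. -/
def ladd {r : ℕ} (a b : QLetter r) : QLetter r := (a.1 + b.1, a.2 + b.2)

/-- Quasi-shuffle product of two words, inductively. -/
noncomputable def qmulW {r : ℕ} : List (QLetter r) → List (QLetter r) → EulerAlg r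
  | [], w => Finsupp.single w 1
  | a :: w, [] => Finsupp.single (a :: w) 1
  | a :: w, b :: v =>
      (qmulW w (b :: v)).mapDomain (a :: ·) +
      (qmulW (a :: w) v).mapDomain (b :: ·) +
      (qmulW w v).mapDomain (ladd a b :: ·)
  termination_by w v => w.length + v.length

/-- Bilinear extension of the quasi-shuffle product to `E_r`. -/
noncomputable def qmul {r : ℕ} (x y : EulerAlg r) : EulerAlg r :=
  x.sum fun w c => y.sum fun v d => (c * d) • qmulW w v
/-- `J[w]`: contraction of a word along a composition of its length. -/
def contract {r n : ℕ} (J : Composition n) (w : List (QLetter r)) : List (QLetter r) :=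
  (w.splitWrtComposition J).map fun b => ((b.map Prod.fst).sum, (b.map Prod.snd).sum)

/-! ### Auxiliary lemmas -/

section Aux

variable {r : ℕ}

lemma ladd_comm (a b : QLetter r) : ladd a b = ladd b a := by
  simp [ladd, add_comm]

lemma ladd_assoc (a b c : QLetter r) : ladd (ladd a b) c = ladd a (ladd b c) := by
  simp [ladd, add_assoc]

lemma qmulW_nil_left (v : List (QLetter r)) : qmulW ([] : List (QLetter r)) v = Finsupp.single v 1 := by
  rw [qmulW]

lemma qmulW_nil_right (u : List (QLetter r)) : qmulW u ([] : List (QLetter r)) = Finsupp.single u 1 := by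
  cases u <;> rw [qmulW]

lemma qmulW_cons_cons (a b : QLetter r) (w v : List (QLetter r)) :
    qmulW (a :: w) (b :: v) =
      (qmulW w (b :: v)).mapDomain (a :: ·) +
      (qmulW (a :: w) v).mapDomain (b :: ·) +
      (qmulW w v).mapDomain (ladd a b :: ·) := by
  rw [qmulW]

lemma qmul_zero_left (y : EulerAlg r) : qmul 0 y = 0 := by simp [qmul]

lemma qmul_add_left (x x' y : EulerAlg r) : qmul (x + x') y = qmul x y + qmul x' y := by
  unfold qmul
  apply Finsupp.sum_add_index'
  · intro w; simp
  · intro w c c'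
    rw [← Finsupp.sum_add]
    congr 1; funext v d
    rw [add_mul, add_smul]

lemma qmul_smul_left (c : ℂ) (x y : EulerAlg r) : qmul (c • x) y = c • qmul x y := by
  unfold qmul
  rw [Finsupp.sum_smul_index (by intro w; simp), Finsupp.smul_sum]
  congr 1; funext w d
  rw [Finsupp.smul_sum]
  congr 1; funext v e
  rw [mul_assoc, smul_smul]

lemma qmul_sum_left {ι : Type*} (s : Finset ι) (f : ι → EulerAlg r) (y : EulerAlg r) :
    qmul (∑ i ∈ s, f i) y = ∑ i ∈ s, qmul (f i) y := by
  let φ : EulerAlg r →+ EulerAlg r :=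
    { toFun := fun x => qmul x y
      map_zero' := qmul_zero_left y
      map_add' := fun a b => qmul_add_left a b y }
  exact map_sum φ f s

lemma qmul_single_single (u v : List (QLetter r)) :
    qmul (Finsupp.single u 1) (Finsupp.single v 1) = qmulW u v := by
  unfold qmul
  rw [Finsupp.sum_single_index (by simp), Finsupp.sum_single_index (by simp)]
  simp

lemma qmul_nil_right (x : EulerAlg r) : qmul x (Finsupp.single ([] : List (QLetter r)) 1) = x := by
  unfold qmul
  have h : ∀ (w : List (QLetter r)) (c : ℂ),
      ((Finsupp.single ([] : List (QLetter r)) (1:ℂ)).sum fun v d => (c * d) • qmulW w v)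
        = Finsupp.single w c := by
    intro w c
    rw [Finsupp.sum_single_index (by simp)]
    simp [qmulW_nil_right, Finsupp.smul_single]
  simp only [h]
  exact Finsupp.sum_single x

/-! ### Contractions as an explicit list -/

/-- The list of all contractions of the word `x :: u`, each recorded as
(first letter, rest of word). -/
def ctr : QLetter r → List (QLetter r) → List (QLetter r × List (QLetter r))
  | x, [] => [(x, [])]
  | x, a :: u => ((ctr a u).map fun p => (x, p.1 :: p.2)) ++ ctr (ladd x a) u

/-- Contractions of an arbitrary word. -/
def csum : List (QLetter r) → List (QLetter r × List (QLetter r))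
  | [] => []
  | x :: u => ctr x u

/-- Sum over all contractions `c` of `L` of `qmulW c v`. -/
noncomputable def QSl (L v : List (QLetter r)) : EulerAlg r :=
  ((csum L).map fun p => qmulW (p.1 :: p.2) v).sum

/-- Sum over all contractions `z :: c` of `L` of `(z ::) (qmulW c v)`. -/
noncomputable def Al (L v : List (QLetter r)) : EulerAlg r :=
  ((csum L).map fun p => (qmulW p.2 v).mapDomain (p.1 :: ·)).sum

lemma QSl_nil_right (L : List (QLetter r)) : QSl L [] = Al L [] := by
  unfold QSl Al
  congr 1
  apply List.map_congr_left
  intro p _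
  rw [qmulW_nil_right, qmulW_nil_right, Finsupp.mapDomain_single]

lemma QSl_key (u : List (QLetter r)) : ∀ (x b : QLetter r) (v : List (QLetter r)),
    QSl (x :: u) (b :: v) = Al (x :: u) (b :: v) + Al (b :: x :: u) v := by
  induction u with
  | nil =>
    intro x b v
    simp only [QSl, Al, csum, ctr, List.map_append, List.sum_append, List.map_map,
      List.map_cons, List.map_nil, List.sum_cons, List.sum_nil, Function.comp_def]
    rw [qmulW_cons_cons]
    rw [qmulW_nil_left, qmulW_nil_left, Finsupp.mapDomain_single, Finsupp.mapDomain_single,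
      Finsupp.mapDomain_single, ladd_comm x b]
    abel
  | cons a u ih =>
    intro x b v
    simp only [QSl, Al, csum, ctr, List.map_append, List.sum_append, List.map_map,
      Function.comp_def]
    -- expand the first chunk of the left-hand side
    have hexp : ((ctr a u).map fun p => qmulW (x :: p.1 :: p.2) (b :: v)).sum =
        ((ctr a u).map fun p => (qmulW (p.1 :: p.2) (b :: v)).mapDomain (x :: ·)).sum +
        ((ctr a u).map fun p => (qmulW (x :: p.1 :: p.2) v).mapDomain (b :: ·)).sum +
        ((ctr a u).map fun p => (qmulW (p.1 :: p.2) v).mapDomain (ladd x b :: ·)).sum := by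
      rw [← List.sum_map_add, ← List.sum_map_add]
      apply congrArg
      apply List.map_congr_left
      intro p _
      rw [qmulW_cons_cons]
    have hih := ih (ladd x a) b v
    simp only [QSl, Al, csum] at hih
    rw [hexp, hih]
    -- unfold the `ctr b (ladd x a :: u)` sums on the right-hand side of hih's expansion
    simp only [ctr, List.map_append, List.sum_append, List.map_map, Function.comp_def]
    rw [ladd_comm b (ladd x a), ladd_assoc x a b, ladd_comm a b, ← ladd_assoc x b a,
      ladd_comm x b]
    abel

/-! ### Compositions: subsingleton cases and the splitting bijection -/

lemma comp_zero_subsingleton : Subsingleton (Composition 0) := by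
  constructor
  intro J K
  have hJ : ∀ (L : Composition 0), L.blocks = [] := by
    intro L
    cases h : L.blocks with
    | nil => rfl
    | cons a t =>
      have h1 := L.blocks_pos (i := a) (by rw [h]; simp)
      have h2 := L.blocks_sum
      rw [h] at h2; simp at h2; omega
  ext1; rw [hJ J, hJ K]

lemma comp_one_subsingleton : Subsingleton (Composition 1) := by
  constructor
  intro J K
  have hJ : ∀ (L : Composition 1), L.blocks = [1] := by
    intro L
    have h2 := L.blocks_sum
    cases h : L.blocks with
    | nil => rw [h] at h2; simp at h2
    | cons a t =>
      have h1 := L.blocks_pos (i := a) (by rw [h]; simp)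
      rw [h] at h2; simp at h2
      have ht : t.sum = 0 := by omega
      have ha : a = 1 := by omega
      have ht' : t = [] := by
        cases t with
        | nil => rfl
        | cons b s =>
          have := L.blocks_pos (i := b) (by rw [h]; simp)
          simp at ht; omega
      simp [ha, ht']
  ext1; rw [hJ J, hJ K]

lemma headI_cons_tail' {α : Type*} [Inhabited α] (l : List α) (h : l ≠ []) :
    l.headI :: l.tail = l := by
  cases l with
  | nil => exact absurd rfl h
  | cons a t => rfl

lemma blocks_ne_nil {m : ℕ} (K : Composition (m + 1)) : K.blocks ≠ [] := by
  intro h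
  have h2 := K.blocks_sum
  rw [h] at h2; simp at h2

/-- Prepend a block of size 1. -/
def consOne {m : ℕ} (K : Composition m) : Composition (m + 1) where
  blocks := 1 :: K.blocks
  blocks_pos := by
    intro i hi
    rcases List.mem_cons.1 hi with h | h
    · omega
    · exact K.blocks_pos h
  blocks_sum := by simp [K.blocks_sum, add_comm]

/-- Increase the first block by 1. -/
def succHead {m : ℕ} (K : Composition (m + 1)) : Composition (m + 2) where
  blocks := (K.blocks.headI + 1) :: K.blocks.tail
  blocks_pos := by
    intro i hi
    rcases List.mem_cons.1 hi with h | h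
    · omega
    · exact K.blocks_pos (List.mem_of_mem_tail h)
  blocks_sum := by
    have h := K.blocks_sum
    rw [← headI_cons_tail' K.blocks (blocks_ne_nil K)] at h
    simp at h ⊢
    omega

lemma comp_split {M : Type*} [AddCommMonoid M] (m : ℕ) (g : Composition (m + 2) → M) :
    ∑ J : Composition (m + 2), g J =
      (∑ K : Composition (m + 1), g (consOne K)) + ∑ K : Composition (m + 1), g (succHead K) := by
  classical
  have hbij : Function.Bijective
      (Sum.elim (consOne : Composition (m+1) → Composition (m+2)) succHead) := by
    constructor
    · intro a b hab
      match a, b with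
      | Sum.inl a, Sum.inl b =>
        simp only [Sum.elim_inl] at hab
        have : a.blocks = b.blocks := by
          have := congrArg Composition.blocks hab
          simpa [consOne] using this
        simp [Composition.ext_iff, this]
      | Sum.inl a, Sum.inr b =>
        exfalso
        have := congrArg (fun J => J.blocks.headI) hab
        simp [consOne, succHead] at this
        have hb := b.blocks_pos (i := b.blocks.headI)
          (by rw [← headI_cons_tail' b.blocks (blocks_ne_nil b)]; simp)
        omega
      | Sum.inr a, Sum.inl b =>
        exfalso
        have := congrArg (fun J => J.blocks.headI) hab
        simp [consOne, succHead] at this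
        have ha := a.blocks_pos (i := a.blocks.headI)
          (by rw [← headI_cons_tail' a.blocks (blocks_ne_nil a)]; simp)
        omega
      | Sum.inr a, Sum.inr b =>
        simp only [Sum.elim_inr] at hab
        have h := congrArg Composition.blocks hab
        simp only [succHead] at h
        have h1 : a.blocks.headI = b.blocks.headI := by
          have := congrArg List.headI h; simpa using this
        have h2 : a.blocks.tail = b.blocks.tail := by
          have := congrArg List.tail h; simpa using this
        have : a.blocks = b.blocks := by
          rw [← headI_cons_tail' a.blocks (blocks_ne_nil a),
            ← headI_cons_tail' b.blocks (blocks_ne_nil b), h1, h2]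
        simp [Composition.ext_iff, this]
    · intro J
      cases h : J.blocks with
      | nil => exact absurd h (blocks_ne_nil J)
      | cons k t =>
        have hk := J.blocks_pos (i := k) (by rw [h]; simp)
        have hsum := J.blocks_sum
        rw [h] at hsum; simp at hsum
        rcases Nat.lt_or_ge k 2 with hk2 | hk2
        · have hk1 : k = 1 := by omega
          refine ⟨Sum.inl ⟨t, ?_, ?_⟩, ?_⟩
          · intro i hi; exact J.blocks_pos (by rw [h]; exact List.mem_cons_of_mem _ hi)
          · omega
          · simp only [Sum.elim_inl]
            ext1
            simp [consOne, h, hk1]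
        · obtain ⟨k', rfl⟩ : ∃ k', k = k' + 1 := ⟨k - 1, by omega⟩
          refine ⟨Sum.inr ⟨k' :: t, ?_, ?_⟩, ?_⟩
          · intro i hi
            rcases List.mem_cons.1 hi with h' | h'
            · omega
            · exact J.blocks_pos (by rw [h]; exact List.mem_cons_of_mem _ h')
          · simp; omega
          · simp only [Sum.elim_inr]
            ext1
            simp [succHead, h]
  rw [← Fintype.sum_bijective _ hbij _ g (fun x => rfl), Fintype.sum_sum_type]
  simp

lemma contract_consOne {m : ℕ} (K : Composition m) (x : QLetter r) (L : List (QLetter r)) :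
    contract (consOne K) (x :: L) = x :: contract K L := by
  unfold contract
  rw [List.splitWrtComposition, List.splitWrtComposition]
  show (List.splitWrtCompositionAux (x :: L) (1 :: K.blocks)).map _ = _
  rw [List.splitWrtCompositionAux_cons]
  simp

lemma contract_succHead {m : ℕ} (K : Composition (m + 1)) (x a : QLetter r)
    (L : List (QLetter r)) :
    contract (succHead K) (x :: a :: L) = contract K (ladd x a :: L) := by
  unfold contract
  rw [List.splitWrtComposition, List.splitWrtComposition]
  show (List.splitWrtCompositionAux (x :: a :: L) ((K.blocks.headI + 1) :: K.blocks.tail)).map _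
    = (List.splitWrtCompositionAux (ladd x a :: L) K.blocks).map _
  have hpos : 0 < K.blocks.headI := by
    apply K.blocks_pos (i := K.blocks.headI)
    rw [← headI_cons_tail' K.blocks (blocks_ne_nil K)]; simp
  obtain ⟨k', hk'⟩ : ∃ k', K.blocks.headI = k' + 1 := ⟨K.blocks.headI - 1, by omega⟩
  conv_rhs => rw [← headI_cons_tail' K.blocks (blocks_ne_nil K)]
  rw [List.splitWrtCompositionAux_cons, List.splitWrtCompositionAux_cons, hk']
  simp only [List.take_succ_cons, List.drop_succ_cons, List.map_cons]
  congr 1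
  simp [ladd, add_assoc]

/-! ### The bridge: sums over compositions = sums over `ctr` -/

lemma bridge (u : List (QLetter r)) : ∀ (x : QLetter r)
    {M : Type} [AddCommMonoid M] (f : List (QLetter r) → M),
    ∑ J : Composition (x :: u).length, f (contract J (x :: u)) =
      ((ctr x u).map fun p => f (p.1 :: p.2)).sum := by
  induction u with
  | nil =>
    intro x M _ f
    haveI : Subsingleton (Composition (1 : ℕ)) := comp_one_subsingleton
    have h1 : (([x] : List (QLetter r)).length) = 1 := rfl
    rw [h1]
    rw [Fintype.sum_subsingleton _ ((consOne (Composition.ones 0)) : Composition (0 + 1))]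
    rw [contract_consOne]
    have : contract (Composition.ones 0) ([] : List (QLetter r)) = [] := by
      have h0 : (Composition.ones 0).blocks = [] := by simp [Composition.ones]
      unfold contract
      rw [List.splitWrtComposition, h0]
      simp [List.splitWrtCompositionAux]
    rw [this]
    simp [ctr]
  | cons a u ih =>
    intro x M _ f
    show ∑ J : Composition (u.length + 1 + 1), f (contract J (x :: a :: u)) = _
    rw [comp_split (u.length) (fun J => f (contract J (x :: a :: u)))]
    simp only [ctr, List.map_append, List.sum_append, List.map_map, Function.comp_def]
    congr 1
    · have h1 : ∀ K : Composition (u.length + 1),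
          f (contract (consOne K) (x :: a :: u)) = f (x :: contract K (a :: u)) := by
        intro K; rw [contract_consOne]
      rw [Finset.sum_congr rfl (fun K _ => h1 K)]
      exact ih a (fun c => f (x :: c))
    · have h2 : ∀ K : Composition (u.length + 1),
          f (contract (succHead K) (x :: a :: u)) = f (contract K (ladd x a :: u)) := by
        intro K; rw [contract_succHead]
      rw [Finset.sum_congr rfl (fun K _ => h2 K)]
      exact ih (ladd x a) f

/-! ### Telescoping -/

lemma telescope {M : Type*} [AddCommGroup M] [Module ℂ M] (A : ℕ → M) (n : ℕ) :
    ∑ p ∈ Finset.range (n + 1), (-1 : ℂ) ^ p • (A p + A (p + 1)) =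
      A 0 + (-1 : ℂ) ^ n • A (n + 1) := by
  induction n with
  | zero => simp
  | succ n ih =>
    rw [Finset.sum_range_succ, ih, pow_succ]
    simp only [mul_neg_one, neg_smul, smul_add]
    abel

/-! ### The key identity -/

lemma take_succ_reverse (l : List (QLetter r)) (p : ℕ) (h : p < l.length) :
    (l.take (p + 1)).reverse = l[p] :: (l.take p).reverse := by
  rw [List.take_succ, List.getElem?_eq_getElem h]
  simp

lemma key (w : List (QLetter r)) (hw : w ≠ []) :
    ∑ p ∈ Finset.range (w.length + 1),
      (-1 : ℂ) ^ p • (∑ J : Composition ((w.take p).length),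
        qmulW (contract J (w.take p).reverse) (w.drop p)) = 0 := by
  obtain ⟨a, w', rfl⟩ : ∃ a w', w = a :: w' := by
    cases w with
    | nil => exact absurd rfl hw
    | cons a w' => exact ⟨a, w', rfl⟩
  set w := a :: w' with hwdef
  set n := w.length with hn
  set A : ℕ → EulerAlg r := fun p =>
    if p ≤ n then Al ((w.take p).reverse) (w.drop p) else 0 with hA
  have hstep : ∀ p ∈ Finset.range (n + 1),
      (∑ J : Composition ((w.take p).length),
        qmulW (contract J (w.take p).reverse) (w.drop p)) = A p + A (p + 1) := by
    intro p hp
    rw [Finset.mem_range] at hp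
    have hpn : p ≤ n := by omega
    rcases Nat.eq_zero_or_pos p with rfl | hppos
    · -- p = 0
      have h0 : A 0 = 0 := by
        simp only [hA, if_pos (by omega : 0 ≤ n)]
        simp [Al, csum]
      have h1 : A 1 = Finsupp.single w 1 := by
        have hn1 : 1 ≤ n := by simp [hn, hwdef]
        simp only [hA, if_pos hn1]
        show Al ((w.take 1).reverse) (w.drop 1) = _
        have : w.take 1 = [a] := by simp [hwdef]
        rw [this]
        have : w.drop 1 = w' := by simp [hwdef]
        rw [this]
        simp [Al, csum, ctr, qmulW_nil_left, Finsupp.mapDomain_single]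
        rw [hwdef]
      rw [h0, h1]
      have : Subsingleton (Composition ((w.take 0).length)) := by
        simpa using comp_zero_subsingleton
      rw [Fintype.sum_subsingleton _ (⟨[], by simp, by simp⟩ : Composition ((w.take 0).length))]
      have hc : contract (⟨[], by simp, by simp⟩ : Composition ((w.take 0).length))
          ((w.take 0).reverse) = [] := by
        unfold contract
        rw [List.splitWrtComposition]
        simp [List.splitWrtCompositionAux]
      rw [hc, qmulW_nil_left]
      simp
    · -- 1 ≤ p ≤ n
      have htake_ne : w.take p ≠ [] := by
        intro h
        have := congrArg List.length h
        simp [hwdef] at this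
        omega
      obtain ⟨x, u, hxu⟩ : ∃ x u, (w.take p).reverse = x :: u := by
        cases h : (w.take p).reverse with
        | nil => exact absurd (by simpa using h) htake_ne
        | cons x u => exact ⟨x, u, rfl⟩
      have hG : (∑ J : Composition ((w.take p).length),
          qmulW (contract J (w.take p).reverse) (w.drop p)) = QSl (x :: u) (w.drop p) := by
        rw [← List.length_reverse (as := w.take p), hxu]
        exact bridge u x (fun c => qmulW c (w.drop p))
      rw [hG]
      rcases Nat.lt_or_ge p n with hplt | hpge
      · -- p < n
        have hdrop : w.drop p = w[p] :: w.drop (p + 1) := List.drop_eq_getElem_cons hplt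
        have hAp : A p = Al (x :: u) (w.drop p) := by
          simp only [hA, if_pos hpn, hxu]
        have hAp1 : A (p + 1) = Al (w[p] :: x :: u) (w.drop (p + 1)) := by
          simp only [hA, if_pos (by omega : p + 1 ≤ n)]
          rw [take_succ_reverse w p hplt, hxu]
        rw [hAp, hAp1, hdrop]
        exact QSl_key u x w[p] (w.drop (p + 1))
      · -- p = n
        have hpn' : p = n := by omega
        have hdrop : w.drop p = [] := by
          rw [hpn']; exact List.drop_length (l := w)
        have hAp : A p = Al (x :: u) (w.drop p) := by
          simp only [hA, if_pos hpn, hxu]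
        have hAp1 : A (p + 1) = 0 := by
          simp only [hA, if_neg (by omega : ¬ p + 1 ≤ n)]
        rw [hAp, hAp1, hdrop, add_zero]
        exact QSl_nil_right (x :: u)
  have hstep' : ∀ p ∈ Finset.range (n + 1),
      (-1 : ℂ) ^ p • (∑ J : Composition ((w.take p).length),
        qmulW (contract J (w.take p).reverse) (w.drop p)) =
      (-1 : ℂ) ^ p • (A p + A (p + 1)) := by
    intro p hp; rw [hstep p hp]
  rw [Finset.sum_congr rfl hstep', telescope]
  have h0 : A 0 = 0 := by
    simp only [hA, if_pos (by omega : 0 ≤ n)]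
    simp [Al, csum]
  have h1 : A (n + 1) = 0 := by
    simp only [hA, if_neg (by omega : ¬ n + 1 ≤ n)]
  rw [h0, h1, smul_zero, add_zero]

end Aux

/-- The second antipode formula: `S(w) = (-1)^n ∑_{I ∈ C(n)} I[aₙ⋯a₁]`. -/
theorem antipode_formula_two (r : ℕ) (hr : 0 < r) (S : EulerAlg r →ₗ[ℂ] EulerAlg r)
    (hS : ∀ w : List (QLetter r),
      ∑ p ∈ Finset.range (w.length + 1),
          qmul (S (Finsupp.single (w.take p) 1)) (Finsupp.single (w.drop p) 1) =
        if w = [] then Finsupp.single ([] : List (QLetter r)) (1 : ℂ) else 0)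
    (w : List (QLetter r)) (hpos : ∀ a ∈ w, 0 < a.1) :
    S (Finsupp.single w 1) =
      (-1 : ℂ) ^ w.length •
        ∑ J : Composition w.length, Finsupp.single (contract J w.reverse) (1 : ℂ) := by
  clear hpos
  -- main statement, proved by strong induction on the length
  suffices h : ∀ (n : ℕ) (w : List (QLetter r)), w.length ≤ n →
      S (Finsupp.single w 1) =
        (-1 : ℂ) ^ w.length •
          ∑ J : Composition w.length, Finsupp.single (contract J w.reverse) (1 : ℂ) by
    exact h w.length w le_rfl
  intro n
  induction n with
  | zero =>
    intro w hw
    have hwnil : w = [] := by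
      cases w with
      | nil => rfl
      | cons a t => simp at hw
    subst hwnil
    have h := hS []
    simp only [List.length_nil, zero_add, Finset.sum_range_one, List.take_nil, List.drop_nil,
      if_pos rfl] at h
    rw [qmul_nil_right] at h
    rw [h]
    have : Subsingleton (Composition ([] : List (QLetter r)).length) := by
      simpa using comp_zero_subsingleton
    rw [Fintype.sum_subsingleton _ (⟨[], by simp, by simp⟩ :
      Composition ([] : List (QLetter r)).length)]
    have hc : contract (⟨[], by simp, by simp⟩ : Composition ([] : List (QLetter r)).length)
        (([] : List (QLetter r)).reverse) = [] := by
      unfold contract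
      rw [List.splitWrtComposition]
      simp [List.splitWrtCompositionAux]
    rw [hc]
    simp
  | succ n ih =>
    intro w hw
    rcases eq_or_ne w [] with rfl | hwne
    · exact ih [] (by simp)
    -- setup
    have h := hS w
    rw [if_neg hwne, Finset.sum_range_succ] at h
    rw [List.take_length, List.drop_length, qmul_nil_right] at h
    have hterm : ∀ p ∈ Finset.range w.length,
        qmul (S (Finsupp.single (w.take p) 1)) (Finsupp.single (w.drop p) 1) =
          (-1 : ℂ) ^ p • ∑ J : Composition ((w.take p).length),
            qmulW (contract J (w.take p).reverse) (w.drop p) := by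
      intro p hp
      rw [Finset.mem_range] at hp
      rw [ih (w.take p) (by rw [List.length_take]; omega)]
      rw [qmul_smul_left, qmul_sum_left]
      have hlen : (w.take p).length = p := by rw [List.length_take]; omega
      rw [hlen]
      congr 1
      apply Finset.sum_congr rfl
      intro J _
      exact qmul_single_single _ _
    rw [Finset.sum_congr rfl hterm] at h
    have hkey := key w hwne
    rw [Finset.sum_range_succ] at hkey
    rw [List.take_length, List.drop_length] at hkey
    have hlast : (∑ J : Composition w.length, qmulW (contract J w.reverse)
        ([] : List (QLetter r))) =
        ∑ J : Composition w.length, Finsupp.single (contract J w.reverse) (1 : ℂ) := by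
      apply Finset.sum_congr rfl
      intro J _
      exact qmulW_nil_right _
    rw [hlast] at hkey
    -- combine h and hkey
    have := hkey
    -- h : Σ + S = 0 ; hkey : Σ + (-1)^n • X = 0
    have hS' : S (Finsupp.single w 1) =
        (-1 : ℂ) ^ w.length • ∑ J : Composition w.length,
          Finsupp.single (contract J w.reverse) (1 : ℂ) := by
      have e1 := eq_neg_of_add_eq_zero_right h
      have e2 := eq_neg_of_add_eq_zero_right hkey
      rw [e1]
      exact e2.symm
    exact hS'
end
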